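/- Let (A₀,A₁) be a pair of 2×2 positive matrices with positive determinants satisfying a₀/c₀ < b₁/d₁ and α_{A₁} < 0 < α_{A₀}. Then the Möbius function x ↦ (x+ϱ_{A₀})/((b₁+d₁−α_{A₁}ϱ_{A₀})x + (a₁−b₁)ϱ_{A₀} − b₁) has strictly negative derivative wherever defined. -/

import Mathlib

/-!
Differentiating the Möbius map gives numerator `q_{A₁}(ϱ_{A₀})`, where
`q_A(z) = α_A z² + β_A z - b`. Since `β_A = α_A - c - b`, the hypothesis `α_{A₁} < 0` makes every
coefficient of `q_{A₁}` negative, so `q_{A₁}` is negative on `[0, ∞)`. And `ϱ_{A₀} ≥ 0`, because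
`γ_A² = β_A² + 4 α_A b ≥ β_A²` when `α_A > 0`.
-/

theorem hasDerivAt_mobius {𝕜 : Type*} [NontriviallyNormedField 𝕜] (p q r s x : 𝕜)
    (hx : r * x + s ≠ 0) :
    HasDerivAt (fun y => (p * y + q) / (r * y + s)) ((p * s - q * r) / (r * x + s) ^ 2) x := by
  have hnum : HasDerivAt (fun y => p * y + q) p x := by
    simpa using ((hasDerivAt_id x).const_mul p).add_const q
  have hden : HasDerivAt (fun y => r * y + s) r x := by
    simpa using ((hasDerivAt_id x).const_mul r).add_const s
  exact (hnum.div hden hx).congr_deriv (by ring)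

/-- The paper's `q_A` for `A = [[a, b], [c, d]]`. -/
def quadOf (a b c d z : ℝ) : ℝ := (a + c - b - d) * z ^ 2 + (a - d - 2 * b) * z - b

theorem quadOf_neg {a b c d z : ℝ} (hb : 0 < b) (hc : 0 ≤ c) (hα : a + c - b - d < 0)
    (hz : 0 ≤ z) : quadOf a b c d z < 0 := by
  have hβ : a - d - 2 * b < 0 := by linarith
  unfold quadOf
  nlinarith [mul_nonneg (mul_nonneg hz hz) (neg_nonneg.mpr hα.le), mul_nonneg hz (neg_nonneg.mpr hβ.le)]

theorem sqrt_sub_div_nonneg {α β b : ℝ} (hα : 0 ≤ α) (hb : 0 ≤ b) :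
    0 ≤ (Real.sqrt (β ^ 2 + 4 * α * b) - β) / (2 * α) := by
  have hβ : β ≤ Real.sqrt (β ^ 2 + 4 * α * b) :=
    calc β ≤ |β| := le_abs_self β
      _ = Real.sqrt (β ^ 2) := (Real.sqrt_sq_eq_abs β).symm
      _ ≤ Real.sqrt (β ^ 2 + 4 * α * b) := Real.sqrt_le_sqrt (by nlinarith [mul_nonneg hα hb])
  exact div_nonneg (sub_nonneg.mpr hβ) (by linarith)

theorem stmt_18_general (a₀ b₀ c₀ d₀ a₁ b₁ c₁ d₁ : ℝ)
    (hb₀ : 0 < b₀)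
    (hb₁ : 0 < b₁) (hc₁ : 0 < c₁)
    (hα₁ : a₁ + c₁ - b₁ - d₁ < 0) (hα₀ : 0 < a₀ + c₀ - b₀ - d₀)
    (ϱ₀ : ℝ)
    (hϱ₀ : ϱ₀ = (Real.sqrt ((a₀ - d₀)^2 + 4*b₀*c₀) - (a₀ - d₀ - 2*b₀)) / (2*(a₀ + c₀ - b₀ - d₀))) :
    ∀ x : ℝ, (b₁ + d₁ - (a₁ + c₁ - b₁ - d₁)*ϱ₀)*x + (a₁ - b₁)*ϱ₀ - b₁ ≠ 0 →
      deriv (fun y => (y + ϱ₀) / ((b₁ + d₁ - (a₁ + c₁ - b₁ - d₁)*ϱ₀)*y + (a₁ - b₁)*ϱ₀ - b₁)) x < 0 := by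
  intro x hx
  set r := b₁ + d₁ - (a₁ + c₁ - b₁ - d₁) * ϱ₀
  set s := (a₁ - b₁) * ϱ₀ - b₁
  have hϱ₀_nonneg : 0 ≤ ϱ₀ := by
    have hdisc : (a₀ - d₀) ^ 2 + 4 * b₀ * c₀
        = (a₀ - d₀ - 2 * b₀) ^ 2 + 4 * (a₀ + c₀ - b₀ - d₀) * b₀ := by ring
    rw [hϱ₀, hdisc]
    exact sqrt_sub_div_nonneg hα₀.le hb₀.le
  have hfun : (fun y => (y + ϱ₀) / (r * y + (a₁ - b₁) * ϱ₀ - b₁))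
      = fun y => (1 * y + ϱ₀) / (r * y + s) := by
    funext y; ring
  have hx' : r * x + s ≠ 0 := by rwa [← add_sub_assoc]
  rw [hfun, (hasDerivAt_mobius 1 ϱ₀ r s x hx').deriv]
  refine div_neg_of_neg_of_pos ?_ (pow_two_pos_of_ne_zero hx')
  have hnum : 1 * s - ϱ₀ * r = quadOf a₁ b₁ c₁ d₁ ϱ₀ := by
    simp only [quadOf, r, s]; ring
  exact hnum ▸ quadOf_neg hb₁ hc₁.le hα₁ hϱ₀_nonneg

theorem stmt_18 (a₀ b₀ c₀ d₀ a₁ b₁ c₁ d₁ : ℝ)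
    (ha₀ : 0 < a₀) (hb₀ : 0 < b₀) (hc₀ : 0 < c₀) (hd₀ : 0 < d₀)
    (ha₁ : 0 < a₁) (hb₁ : 0 < b₁) (hc₁ : 0 < c₁) (hd₁ : 0 < d₁)
    (hdet₀ : 0 < a₀*d₀ - b₀*c₀) (hdet₁ : 0 < a₁*d₁ - b₁*c₁)
    (hord : a₀/c₀ < b₁/d₁)
    (hα₁ : a₁ + c₁ - b₁ - d₁ < 0) (hα₀ : 0 < a₀ + c₀ - b₀ - d₀)
    (ϱ₀ : ℝ)
    (hϱ₀ : ϱ₀ = (Real.sqrt ((a₀ - d₀)^2 + 4*b₀*c₀) - (a₀ - d₀ - 2*b₀)) / (2*(a₀ + c₀ - b₀ - d₀))) :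
    ∀ x : ℝ, (b₁ + d₁ - (a₁ + c₁ - b₁ - d₁)*ϱ₀)*x + (a₁ - b₁)*ϱ₀ - b₁ ≠ 0 →
      deriv (fun y => (y + ϱ₀) / ((b₁ + d₁ - (a₁ + c₁ - b₁ - d₁)*ϱ₀)*y + (a₁ - b₁)*ϱ₀ - b₁)) x < 0 :=
  stmt_18_general a₀ b₀ c₀ d₀ a₁ b₁ c₁ d₁ hb₀ hb₁ hc₁ hα₁ hα₀ ϱ₀ hϱ₀
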